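/- Let P be a symmetric positive semidefinite n×n real matrix, and for j = 1,…,M let Λⱼ be diagonal k_j×k_j matrices with nonnegative entries, Hⱼ real k_j×n matrices, and fⱼⁱ : ℝ → ℝ continuous functions with ν·fⱼⁱ(ν) > 0 for ν ≠ 0. If P + ρ·∑ⱼ HⱼᵀΛⱼHⱼ is positive definite for some ρ ∈ ℝ, then the function V(x) = xᵀPx + 2·∑ⱼ ∑ᵢ Λⱼⁱ·∫₀^{Hⱼ⁽ⁱ⁾x} fⱼⁱ(τ)dτ satisfies V(x) > 0 for all x ≠ 0. -/

import Mathlib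

/-! Both summands of `V` are nonnegative: `P ⪰ 0`, and by the sector condition `f` has the sign
of its argument, so every `∫₀^y f` is nonnegative and vanishes only at `y = 0`. If `V x = 0`, then
`xᵀPx = 0` and every term `Λⱼⁱ (Hⱼ x)ᵢ²` vanishes, so the positive definite form
`P + ρ ∑ⱼ HⱼᵀΛⱼHⱼ` vanishes at `x`, forcing `x = 0`. -/

open Matrix intervalIntegral

section Sector

variable {f : ℝ → ℝ}

theorem integral_sector_pos (hf : Continuous f) (hs : ∀ ν : ℝ, ν ≠ 0 → 0 < ν * f ν) {y : ℝ}
    (hy : y ≠ 0) : 0 < ∫ τ in (0:ℝ)..y, f τ := by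
  rcases hy.lt_or_gt with hy | hy
  · rw [integral_symm, ← integral_neg]
    refine intervalIntegral_pos_of_pos_on (hf.neg.intervalIntegrable _ _) (fun t ht => ?_) hy
    exact neg_pos.mpr (neg_of_mul_pos_right (hs t ht.2.ne) ht.2.le)
  · refine intervalIntegral_pos_of_pos_on (hf.intervalIntegrable _ _) (fun t ht => ?_) hy
    exact pos_of_mul_pos_right (hs t ht.1.ne') ht.1.le

theorem integral_sector_nonneg (hf : Continuous f) (hs : ∀ ν : ℝ, ν ≠ 0 → 0 < ν * f ν) (y : ℝ) :
    0 ≤ ∫ τ in (0:ℝ)..y, f τ := by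
  rcases eq_or_ne y 0 with rfl | hy
  · simp
  · exact (integral_sector_pos hf hs hy).le

theorem mul_sq_eq_zero_of_mul_integral_sector_eq_zero (hf : Continuous f)
    (hs : ∀ ν : ℝ, ν ≠ 0 → 0 < ν * f ν) {c y : ℝ} (h : c * ∫ τ in (0:ℝ)..y, f τ = 0) :
    c * y ^ 2 = 0 := by
  rcases mul_eq_zero.mp h with hc | hI
  · rw [hc, zero_mul]
  · have hy : y = 0 := by_contra fun hy => (integral_sector_pos hf hs hy).ne' hI
    rw [hy, sq, mul_zero, mul_zero]

end Sector

theorem dotProduct_transpose_mul_diagonal_mul_mulVec {R m n : Type*} [CommSemiring R]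
    [Fintype m] [Fintype n] [DecidableEq m] (H : Matrix m n R) (d : m → R) (x : n → R) :
    x ⬝ᵥ (Hᵀ * diagonal d * H) *ᵥ x = ∑ i, d i * (H *ᵥ x) i ^ 2 := by
  rw [← mulVec_mulVec, ← mulVec_mulVec, dotProduct_mulVec, vecMul_transpose]
  simp only [dotProduct, mulVec_diagonal]
  exact Finset.sum_congr rfl fun i _ => by ring

theorem sum_sum_eq_zero_of_nonneg {ι : Type*} {κ : ι → Type*} [Fintype ι] [∀ j, Fintype (κ j)]
    {a : (j : ι) → κ j → ℝ} (ha : ∀ j i, 0 ≤ a j i) (h : ∑ j, ∑ i, a j i = 0) (j : ι) (i : κ j) :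
    a j i = 0 := by
  have hrow := (Finset.sum_eq_zero_iff_of_nonneg fun j _ => Finset.sum_nonneg fun i _ => ha j i).mp
    h j (Finset.mem_univ j)
  exact (Finset.sum_eq_zero_iff_of_nonneg fun i _ => ha j i).mp hrow i (Finset.mem_univ i)

open Matrix in
theorem persidskii_lyapunov_posdef {n M : ℕ} (k : Fin M → ℕ)
    (P : Matrix (Fin n) (Fin n) ℝ) (hP : P.PosSemidef)
    (Λ : (j : Fin M) → Fin (k j) → ℝ) (hΛ : ∀ j i, 0 ≤ Λ j i)
    (H : (j : Fin M) → Matrix (Fin (k j)) (Fin n) ℝ)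
    (f : (j : Fin M) → Fin (k j) → ℝ → ℝ)
    (hfcont : ∀ j i, Continuous (f j i))
    (hfsec : ∀ j i (ν : ℝ), ν ≠ 0 → ν * f j i ν > 0)
    (ρ : ℝ)
    (hpos : (P + ρ • ∑ j, (H j)ᵀ * Matrix.diagonal (Λ j) * H j).PosDef) :
    ∀ x : Fin n → ℝ, x ≠ 0 →
      0 < x ⬝ᵥ P.mulVec x +
        2 * ∑ j, ∑ i, Λ j i * ∫ τ in (0:ℝ)..((H j).mulVec x i), f j i τ := by
  intro x hx
  have hterm : ∀ j i, 0 ≤ Λ j i * ∫ τ in (0:ℝ)..((H j).mulVec x i), f j i τ := fun j i =>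
    mul_nonneg (hΛ j i) (integral_sector_nonneg (hfcont j i) (hfsec j i) _)
  have hq : 0 ≤ x ⬝ᵥ P *ᵥ x := by simpa using hP.dotProduct_mulVec_nonneg x
  have hΦ := Finset.sum_nonneg fun j (_ : j ∈ Finset.univ) =>
    Finset.sum_nonneg fun i (_ : i ∈ Finset.univ) => hterm j i
  by_contra! hV
  have hq0 : x ⬝ᵥ P *ᵥ x = 0 := by linarith
  have hΦ0 := sum_sum_eq_zero_of_nonneg hterm (by linarith)
  have hS : ∑ j, ∑ i, Λ j i * (H j *ᵥ x) i ^ 2 = 0 := Finset.sum_eq_zero fun j _ =>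
    Finset.sum_eq_zero fun i _ =>
      mul_sq_eq_zero_of_mul_integral_sector_eq_zero (hfcont j i) (hfsec j i) (hΦ0 j i)
  have hform := hpos.dotProduct_mulVec_pos hx
  simp only [star_trivial, add_mulVec, smul_mulVec, dotProduct_add, dotProduct_smul, sum_mulVec,
    dotProduct_sum, dotProduct_transpose_mul_diagonal_mul_mulVec, hq0, hS] at hform
  simp at hform
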